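/- Let J ⋐ J₁ ⋐ J₂ ⋐ J₃ ⋐ (0,∞) be open intervals, and let −1 < σ < σ₁ < σ̃₁ < σ₂ < σ₃ < 1. For R large let S_+ = S_{+,R^{1/4}} be a phase function, defined as in the Isozaki–Kitada construction, satisfying the eikonal equation Σ g^{ij}(x) ∂_{x_i}S_+ ∂_{x_j}S_+ = |ξ|² on Γ^+(R^{1/4},J₃,σ₃) together with the bounds |∂_x^α ∂_ξ^β(S_+(x,ξ) − x·ξ)| ≤ C_{αβ} min(⟨x⟩^{1−ρ−|α|}, R^{(1−ρ−|α|)/4}). Then there exist c > 0 and R₀ > 1 such that for every τ ≥ 0, every R ≥ R₀, and all x, y, ξ with (x,ξ) ∈ Γ^+(R^{1/3},J₂,σ₂) ∖ Γ^+(R^{5/12},J₁,σ̃₁) and (y,ξ) ∈ Γ^+(R^{1/2},J₁,σ₁), one has |∇_ξ(τ|ξ|² + S_+(y,ξ) − S_+(x,ξ))| ≥ c(1 + τ + |x| + |y|). -/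

import Mathlib

open MeasureTheory Filter Complex
open scoped ENNReal NNReal InnerProductSpace FourierTransform

noncomputable section

/-- `ℝ^d` as a Euclidean space. -/
abbrev Rd (d : ℕ) : Type := EuclideanSpace ℝ (Fin d)

/-- `i`-th partial derivative of a complex-valued function on `ℝ^d`. -/
def pderivC {d : ℕ} (i : Fin d) (f : Rd d → ℂ) (x : Rd d) : ℂ :=
  fderiv ℝ f x (EuclideanSpace.single i 1)

/-- `i`-th partial derivative of a real-valued function on `ℝ^d`. -/
def pderivR {d : ℕ} (i : Fin d) (f : Rd d → ℝ) (x : Rd d) : ℝ :=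
  fderiv ℝ f x (EuclideanSpace.single i 1)

/-- The Laplace–Beltrami operator `Δ_g u = (det g)^{-1/2} ∂_i ((det g)^{1/2} g^{ij} ∂_j u)`
of the Riemannian metric `g = (g_{ij})` on `ℝ^d`. -/
def LaplaceBeltrami {d : ℕ} (g : Rd d → Matrix (Fin d) (Fin d) ℝ) (u : Rd d → ℂ)
    (x : Rd d) : ℂ :=
  ((Real.sqrt (g x).det : ℝ) : ℂ)⁻¹ *
    ∑ i, pderivC i
      (fun y => ((Real.sqrt (g y).det : ℝ) : ℂ) * ∑ j, (((g y)⁻¹ i j : ℝ) : ℂ) * pderivC j u y) x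

/-- A smooth symmetric matrix-valued function on `ℝ^d` (a smooth metric). -/
def IsSmoothMetric {d : ℕ} (g : Rd d → Matrix (Fin d) (Fin d) ℝ) : Prop :=
  (∀ i j, ContDiff ℝ (⊤ : ℕ∞) fun x => g x i j) ∧ ∀ x, (g x).IsSymm

/-- Uniform two-sided quadratic form bounds `c‖ξ‖² ≤ ξᵀ m(x) ξ ≤ C‖ξ‖²`. -/
def UnifBounds {d : ℕ} (m : Rd d → Matrix (Fin d) (Fin d) ℝ) (c C : ℝ) : Prop :=
  ∀ (x ξ : Rd d),
    c * ‖ξ‖ ^ 2 ≤ ∑ i, ∑ j, m x i j * ξ i * ξ j ∧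
      ∑ i, ∑ j, m x i j * ξ i * ξ j ≤ C * ‖ξ‖ ^ 2

/-- Long-range condition: `|∂^α (g^{ij}(x) - δ_{ij})| ≤ C_α ⟨x⟩^{-ρ-|α|}`. -/
def LongRange {d : ℕ} (ρ : ℝ) (g : Rd d → Matrix (Fin d) (Fin d) ℝ) : Prop :=
  ∀ (i j : Fin d) (n : ℕ), ∃ C : ℝ, ∀ x : Rd d,
    ‖iteratedFDeriv ℝ n (fun y => (g y)⁻¹ i j - if i = j then (1 : ℝ) else 0) x‖
      ≤ C * (1 + ‖x‖ ^ 2) ^ (-(ρ + n) / 2)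

/-- All derivatives of the metric coefficients are bounded on `ℝ^d`. -/
def BoundedDerivs {d : ℕ} (g : Rd d → Matrix (Fin d) (Fin d) ℝ) : Prop :=
  ∀ (i j : Fin d) (n : ℕ), ∃ C : ℝ, ∀ x : Rd d,
    ‖iteratedFDeriv ℝ n (fun y => g y i j) x‖ ≤ C

/-- Christoffel symbols `Γ^k_{ij}` of the metric `g`. -/
def Christoffel {d : ℕ} (g : Rd d → Matrix (Fin d) (Fin d) ℝ) (x : Rd d)
    (k i j : Fin d) : ℝ :=
  (1 / 2) * ∑ l, (g x)⁻¹ k l *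
    (pderivR i (fun y => g y j l) x + pderivR j (fun y => g y i l) x
      - pderivR l (fun y => g y i j) x)

/-- `γ` is a geodesic of the metric `g`. -/
def IsGeodesic {d : ℕ} (g : Rd d → Matrix (Fin d) (Fin d) ℝ) (γ : ℝ → Rd d) : Prop :=
  ContDiff ℝ 2 γ ∧ ∀ (t : ℝ) (k : Fin d),
    deriv (deriv fun s => γ s k) t
      + ∑ i, ∑ j, Christoffel g (γ t) k i j * deriv (fun s => γ s i) t
          * deriv (fun s => γ s j) t = 0

/-- The metric `g` is non-trapping: every (nonconstant) geodesic leaves every compact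
subset of `ℝ^d` in finite time. -/
def NonTrapping {d : ℕ} (g : Rd d → Matrix (Fin d) (Fin d) ℝ) : Prop :=
  ∀ γ : ℝ → Rd d, IsGeodesic g γ → deriv γ 0 ≠ 0 →
    ∀ K : Set (Rd d), IsCompact K → ∃ T : ℝ, ∀ t : ℝ, T ≤ |t| → γ t ∉ K

/-- A Strichartz-admissible pair in dimension `d`: `2/p + d/q = d/2`, `p ≥ 2`,
`(p,q) ≠ (2,∞)`. -/
def Admissible (d : ℕ) (p q : ℝ≥0∞) : Prop :=
  2 / p + d / q = d / 2 ∧ 2 ≤ p ∧ (p, q) ≠ (2, ⊤)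

/-- Mixed space-time norm `‖u‖_{L^p(s; L^q(μ))}`. -/
def mixedNorm {d : ℕ} (p q : ℝ≥0∞) (s : Set ℝ) (μ : Measure (Rd d))
    (u : ℝ → Rd d → ℂ) : ℝ≥0∞ :=
  eLpNorm (fun t => (eLpNorm (u t) q μ).toReal) p (volume.restrict s)

/-- The Sobolev `H^s` norm of a Schwartz function, via the Fourier transform. -/
def schwartzHsNorm {d : ℕ} (s : ℝ) (f : SchwartzMap (Rd d) ℂ) : ℝ≥0∞ :=
  eLpNorm (fun ξ : Rd d => ((1 + ‖ξ‖ ^ 2) ^ (s / 2) : ℝ) • 𝓕 (⇑f) ξ) 2 volume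

/-- The Sobolev `H^s` norm (`s ≥ 0`) of a general function, obtained from the Fourier
description on Schwartz functions by approximation in `L²`; it is infinite if the
function is not in `H^s`. -/
def hsNorm {d : ℕ} (s : ℝ) (f : Rd d → ℂ) : ℝ≥0∞ :=
  ⨅ φ : {φ : ℕ → SchwartzMap (Rd d) ℂ //
      Tendsto (fun n => eLpNorm (f - ⇑(φ n)) 2 volume) atTop (nhds 0)},
    liminf (fun n => schwartzHsNorm s (φ.1 n)) atTop

/-- Abstract spectral data for the nonnegative self-adjoint realization `P` of `-Δ_g`
on `L²(ℝ^d)`: `res z` is the resolvent `(P - z)⁻¹`, `fc φ` the operator `φ(P)` given by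
the Borel functional calculus (only the values of `φ` on the spectrum, contained in
`[0,∞)`, matter), and `U t` the Schrödinger group `e^{-itP}`.  The fields record the
standard properties characterizing these objects. -/
structure SchrodingerOps (d : ℕ) (g : Rd d → Matrix (Fin d) (Fin d) ℝ) where
  res : ℂ → (Rd d → ℂ) → Rd d → ℂ
  fc : (ℝ → ℂ) → (Rd d → ℂ) → Rd d → ℂ
  U : ℝ → (Rd d → ℂ) → Rd d → ℂ
  res_spec : ∀ z : ℂ, z.im ≠ 0 → ∀ f : SchwartzMap (Rd d) ℂ,
    ContDiff ℝ (⊤ : ℕ∞) (res z ⇑f) ∧ MemLp (res z ⇑f) 2 volume ∧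
      ∀ x, -(LaplaceBeltrami g (res z ⇑f) x) - z * res z ⇑f x = f x
  res_add : ∀ z u v, MemLp u 2 volume → MemLp v 2 volume →
    res z (u + v) =ᵐ[volume] res z u + res z v
  res_smul : ∀ (z : ℂ) (a : ℂ) u, MemLp u 2 volume →
    res z (a • u) =ᵐ[volume] a • res z u
  res_bound : ∀ z : ℂ, z.im ≠ 0 → ∀ u, MemLp u 2 volume →
    eLpNorm (res z u) 2 volume ≤ ENNReal.ofReal |z.im|⁻¹ * eLpNorm u 2 volume
  fc_res : ∀ z : ℂ, z.im ≠ 0 → ∀ u, MemLp u 2 volume →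
    fc (fun l => ((l : ℂ) - z)⁻¹) u =ᵐ[volume] res z u
  fc_add : ∀ (φ ψ : ℝ → ℂ) u, MemLp u 2 volume →
    fc (φ + ψ) u =ᵐ[volume] fc φ u + fc ψ u
  fc_mul : ∀ (φ ψ : ℝ → ℂ) u, MemLp u 2 volume →
    fc (fun l => φ l * ψ l) u =ᵐ[volume] fc φ (fc ψ u)
  fc_addu : ∀ (φ : ℝ → ℂ) u v, MemLp u 2 volume → MemLp v 2 volume →
    fc φ (u + v) =ᵐ[volume] fc φ u + fc φ v
  fc_smulu : ∀ (φ : ℝ → ℂ) (a : ℂ) u, MemLp u 2 volume →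
    fc φ (a • u) =ᵐ[volume] a • fc φ u
  fc_bound : ∀ (φ : ℝ → ℂ) (M : ℝ), (∀ l : ℝ, 0 ≤ l → ‖φ l‖ ≤ M) →
    ∀ u, MemLp u 2 volume →
      eLpNorm (fc φ u) 2 volume ≤ ENNReal.ofReal M * eLpNorm u 2 volume
  U_group : ∀ t s u, MemLp u 2 volume → U (t + s) u =ᵐ[volume] U t (U s u)
  U_zero : ∀ u, MemLp u 2 volume → U 0 u =ᵐ[volume] u
  U_isometry : ∀ t u, MemLp u 2 volume →
    eLpNorm (U t u) 2 volume = eLpNorm u 2 volume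
  U_addu : ∀ t u v, MemLp u 2 volume → MemLp v 2 volume →
    U t (u + v) =ᵐ[volume] U t u + U t v
  U_smulu : ∀ (t : ℝ) (a : ℂ) u, MemLp u 2 volume → U t (a • u) =ᵐ[volume] a • U t u
  U_eq : ∀ f : SchwartzMap (Rd d) ℂ, ∀ (t : ℝ) (x : Rd d),
    Complex.I * deriv (fun s => U s ⇑f x) t + LaplaceBeltrami g (U t ⇑f) x = 0

/-- The semiclassical quantization
`a(x,hD)u(x) = (2πh)^{-d} ∬ e^{i(x-y)·ξ/h} a(x,ξ) u(y) dy dξ`. -/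
def sclOp {d : ℕ} (h : ℝ) (a : Rd d → Rd d → ℂ) (u : Rd d → ℂ) (x : Rd d) : ℂ :=
  (((2 * Real.pi * h) ^ d : ℝ))⁻¹ •
    ∫ ξ : Rd d, ∫ y : Rd d,
      Complex.exp (Complex.I * ((⟪x - y, ξ⟫_ℝ : ℝ) : ℂ) / (h : ℂ)) * (a x ξ * u y)

/-- The principal symbol `p₀(x,ξ) = Σ g^{ij}(x) ξ_i ξ_j` of `-Δ_g`. -/
def principalSymbol {d : ℕ} (g : Rd d → Matrix (Fin d) (Fin d) ℝ) (x ξ : Rd d) : ℝ :=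
  ∑ i, ∑ j, (g x)⁻¹ i j * ξ i * ξ j

/-- The outgoing (`ε = 1`) and incoming (`ε = -1`) zones
`Γ^±(R,J,σ) = {(x,ξ) : |x| > R, |ξ|² ∈ J, ±⟨x,ξ⟩/(|x||ξ|) > -σ}`. -/
def zone (d : ℕ) (ε R : ℝ) (J : Set ℝ) (σ : ℝ) : Set (Rd d × Rd d) :=
  {p | R < ‖p.1‖ ∧ ‖p.2‖ ^ 2 ∈ J ∧ -σ < ε * (⟪p.1, p.2⟫_ℝ / (‖p.1‖ * ‖p.2‖))}

end

/-! Up to the symbol errors `∇_ξ(S_+(z,ξ) - z·ξ) = O(⟨z⟩^{1-ρ})`, which are `O(|z| R^{-ρ/3})`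
since `|x|, |y| > R^{1/3}`, the gradient is the vector `v = 2τξ + y - x`. Its length dominates
`⟪v, u⟫ / ‖u‖` for the test directions `u = ξ, y` and, when `x` is incoming relative to `ξ`,
`u = -x`; the angle conditions of the zones make a convex combination of these pairings at
least `c (τ + |x| + |y|)`. A point `x` outside `Γ⁺(R^{5/12}, J₁, σ̃₁)` is incoming unless
`|x| ≤ R^{5/12} ≪ |y|`, and then `u = ξ, y` already suffice. -/

section InnerProduct

variable {E : Type*} [NormedAddCommGroup E] [InnerProductSpace ℝ E]

lemma le_norm_of_mul_norm_le_inner {v u : E} {r : ℝ} (hu : u ≠ 0)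
    (h : r * ‖u‖ ≤ ⟪v, u⟫_ℝ) : r ≤ ‖v‖ :=
  le_of_mul_le_mul_right (h.trans (real_inner_le_norm v u)) (norm_pos_iff.2 hu)

lemma neg_mul_le_inner_of_neg_lt_inner_div {x ξ : E} {s : ℝ}
    (h : -s < ⟪x, ξ⟫_ℝ / (‖x‖ * ‖ξ‖)) : -s * (‖x‖ * ‖ξ‖) ≤ ⟪x, ξ⟫_ℝ := by
  rcases (mul_nonneg (norm_nonneg x) (norm_nonneg ξ)).eq_or_lt with h0 | h0
  · rw [← h0, mul_zero]
    rcases mul_eq_zero.1 h0.symm with hx | hξ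
    · simp [norm_eq_zero.1 hx]
    · simp [norm_eq_zero.1 hξ]
  · exact ((lt_div_iff₀ h0).1 h).le

lemma mul_le_norm_two_mul_smul_add_sub_of_norm_le {x y ξ : E} {τ t : ℝ} (hτ : 0 ≤ τ)
    (ht : -1 < t) (ht1 : t < 1) (hy0 : y ≠ 0) (hξ0 : ξ ≠ 0)
    (hy : -t * (‖y‖ * ‖ξ‖) ≤ ⟪y, ξ⟫_ℝ) (hx : ‖x‖ ≤ (1 - t) / 4 * ‖y‖) :
    (1 - t) / 8 * (2 * τ * ‖ξ‖ + ‖x‖ + ‖y‖) ≤ ‖(2 * τ) • ξ + y - x‖ := by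
  have hxξ := real_inner_le_norm x ξ
  have hxy := real_inner_le_norm x y
  have hyξ : -t * (‖ξ‖ * ‖y‖) ≤ ⟪ξ, y⟫_ℝ := by rw [real_inner_comm]; linarith
  have h₁ : 2 * τ * ‖ξ‖ - t * ‖y‖ - ‖x‖ ≤ ‖(2 * τ) • ξ + y - x‖ := by
    refine le_norm_of_mul_norm_le_inner hξ0 ?_
    simp only [inner_sub_left, inner_add_left, real_inner_smul_left,
      real_inner_self_eq_norm_sq]
    nlinarith
  have h₂ : -2 * τ * t * ‖ξ‖ + ‖y‖ - ‖x‖ ≤ ‖(2 * τ) • ξ + y - x‖ := by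
    refine le_norm_of_mul_norm_le_inner hy0 ?_
    simp only [inner_sub_left, inner_add_left, real_inner_smul_left,
      real_inner_self_eq_norm_sq]
    nlinarith [mul_le_mul_of_nonneg_left hyξ (by positivity : (0 : ℝ) ≤ 2 * τ)]
  nlinarith [mul_nonneg (mul_nonneg hτ (norm_nonneg ξ)) (by linarith : (0 : ℝ) ≤ 1 - t),
    norm_nonneg x, norm_nonneg y,
    mul_le_mul_of_nonneg_left hx (by linarith : (0 : ℝ) ≤ 1 - t)]

lemma mul_le_norm_two_mul_smul_add_sub_of_inner_le {x y ξ : E} {τ s t : ℝ} (hτ : 0 ≤ τ)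
    (ht : -1 < t) (hts : t < s) (hs : s ≤ 1) (hx0 : x ≠ 0) (hy0 : y ≠ 0) (hξ0 : ξ ≠ 0)
    (hy : -t * (‖y‖ * ‖ξ‖) ≤ ⟪y, ξ⟫_ℝ) (hx : ⟪x, ξ⟫_ℝ ≤ -s * (‖x‖ * ‖ξ‖)) :
    (s - t) / 4 * (2 * τ * ‖ξ‖ + ‖x‖ + ‖y‖) ≤ ‖(2 * τ) • ξ + y - x‖ := by
  have hxy := real_inner_le_norm x y
  have hyx := real_inner_le_norm y x
  have hyξ : -t * (‖ξ‖ * ‖y‖) ≤ ⟪ξ, y⟫_ℝ := by rw [real_inner_comm]; linarith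
  have hξx : ⟪ξ, x⟫_ℝ ≤ -s * (‖ξ‖ * ‖x‖) := by rw [real_inner_comm]; linarith
  have h₁ : 2 * τ * ‖ξ‖ + s * ‖x‖ - t * ‖y‖ ≤ ‖(2 * τ) • ξ + y - x‖ := by
    refine le_norm_of_mul_norm_le_inner hξ0 ?_
    simp only [inner_sub_left, inner_add_left, real_inner_smul_left,
      real_inner_self_eq_norm_sq]
    nlinarith
  have h₂ : 2 * τ * s * ‖ξ‖ + ‖x‖ - ‖y‖ ≤ ‖(2 * τ) • ξ + y - x‖ := by
    refine le_norm_of_mul_norm_le_inner (neg_ne_zero.2 hx0) ?_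
    simp only [inner_neg_right, inner_sub_left, inner_add_left, real_inner_smul_left,
      real_inner_self_eq_norm_sq, norm_neg]
    nlinarith [mul_le_mul_of_nonneg_left hξx (by positivity : (0 : ℝ) ≤ 2 * τ)]
  have h₃ : -2 * τ * t * ‖ξ‖ + ‖y‖ - ‖x‖ ≤ ‖(2 * τ) • ξ + y - x‖ := by
    refine le_norm_of_mul_norm_le_inner hy0 ?_
    simp only [inner_sub_left, inner_add_left, real_inner_smul_left,
      real_inner_self_eq_norm_sq]
    nlinarith [mul_le_mul_of_nonneg_left hyξ (by positivity : (0 : ℝ) ≤ 2 * τ)]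
  -- weights `1/2, 1/4 - (s+t)/8, 1/4 + (s+t)/8`; the `τ`-term survives because `(s+t)² ≤ 4`
  have hw₂ : 0 ≤ 1 / 4 - (s + t) / 8 := by linarith
  have hw₃ : 0 ≤ 1 / 4 + (s + t) / 8 := by linarith
  nlinarith [mul_le_mul_of_nonneg_left h₂ hw₂, mul_le_mul_of_nonneg_left h₃ hw₃,
    mul_nonneg (mul_nonneg hτ (norm_nonneg ξ)) (mul_nonneg hw₂ hw₃)]

end InnerProduct

lemma mul_le_norm_two_mul_smul_add_sub_of_zone {d : ℕ} {x y ξ : Rd d} {J : Set ℝ}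
    {τ R s t : ℝ} (hτ : 0 ≤ τ) (ht : -1 < t) (hts : t < s) (hs : s ≤ 1) (hR : 0 < R)
    (hRst : R ^ (-(1 / 12 : ℝ)) ≤ (s - t) / 4) (hx0 : x ≠ 0) (hξ0 : ξ ≠ 0)
    (hxn : (x, ξ) ∉ zone d 1 (R ^ ((5 : ℝ) / 12)) J s)
    (hy : (y, ξ) ∈ zone d 1 (R ^ ((1 : ℝ) / 2)) J t) :
    (s - t) / 8 * (2 * τ * ‖ξ‖ + ‖x‖ + ‖y‖) ≤ ‖(2 * τ) • ξ + y - x‖ := by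
  obtain ⟨hyR, hξJ, hyξ⟩ : R ^ ((1 : ℝ) / 2) < ‖y‖ ∧ ‖ξ‖ ^ 2 ∈ J ∧
      -t < 1 * (⟪y, ξ⟫_ℝ / (‖y‖ * ‖ξ‖)) := hy
  rw [one_mul] at hyξ
  have hy0 : y ≠ 0 := norm_pos_iff.1 ((Real.rpow_nonneg hR.le _).trans_lt hyR)
  have hsum : 0 ≤ 2 * τ * ‖ξ‖ + ‖x‖ + ‖y‖ := by positivity
  by_cases hxR : ‖x‖ ≤ R ^ ((5 : ℝ) / 12)
  · have hxy : ‖x‖ ≤ (1 - t) / 4 * ‖y‖ :=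
      calc ‖x‖ ≤ R ^ ((1 : ℝ) / 2) * R ^ (-(1 / 12 : ℝ)) := by
            rw [← Real.rpow_add hR]; norm_num; exact hxR
        _ ≤ ‖y‖ * ((1 - t) / 4) :=
            mul_le_mul hyR.le (hRst.trans (by linarith)) (by positivity) (norm_nonneg y)
        _ = (1 - t) / 4 * ‖y‖ := mul_comm _ _
    refine le_trans ?_ (mul_le_norm_two_mul_smul_add_sub_of_norm_le hτ ht (by linarith) hy0
      hξ0 (neg_mul_le_inner_of_neg_lt_inner_div hyξ) hxy)
    exact mul_le_mul_of_nonneg_right (by linarith) hsum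
  · have hxξ : ⟪x, ξ⟫_ℝ / (‖x‖ * ‖ξ‖) ≤ -s := by
      by_contra h
      exact hxn ⟨not_le.1 hxR, hξJ, by rw [one_mul]; exact not_le.1 h⟩
    refine le_trans ?_ (mul_le_norm_two_mul_smul_add_sub_of_inner_le hτ ht hts hs hx0 hy0 hξ0
      (neg_mul_le_inner_of_neg_lt_inner_div hyξ) ((div_le_iff₀ (by positivity)).1 hxξ))
    exact mul_le_mul_of_nonneg_right (by linarith) hsum

section Calculus

variable {E : Type*} [NormedAddCommGroup E] [InnerProductSpace ℝ E]

lemma sub_le_norm_fderiv_phase {f g : E → ℝ} {ξ : E} (x y : E) (τ : ℝ)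
    (hf : DifferentiableAt ℝ f ξ) (hg : DifferentiableAt ℝ g ξ) :
    ‖(2 * τ) • ξ + y - x‖ - ‖fderiv ℝ (fun η => f η - ⟪y, η⟫_ℝ) ξ‖
        - ‖fderiv ℝ (fun η => g η - ⟪x, η⟫_ℝ) ξ‖
      ≤ ‖fderiv ℝ (fun η => τ * ‖η‖ ^ 2 + f η - g η) ξ‖ := by
  have hfy : HasFDerivAt (fun η => f η - ⟪y, η⟫_ℝ) (fderiv ℝ f ξ - innerSL ℝ y) ξ :=
    hf.hasFDerivAt.sub (innerSL ℝ y).hasFDerivAt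
  have hgx : HasFDerivAt (fun η => g η - ⟪x, η⟫_ℝ) (fderiv ℝ g ξ - innerSL ℝ x) ξ :=
    hg.hasFDerivAt.sub (innerSL ℝ x).hasFDerivAt
  have hφ : fderiv ℝ (fun η => τ * ‖η‖ ^ 2 + f η - g η) ξ
      = innerSL ℝ ((2 * τ) • ξ + y - x)
        - ((fderiv ℝ g ξ - innerSL ℝ x) - (fderiv ℝ f ξ - innerSL ℝ y)) := by
    have hder : HasFDerivAt (fun η => τ * ‖η‖ ^ 2 + f η - g η)
        (τ • (2 • innerSL ℝ ξ) + fderiv ℝ f ξ - fderiv ℝ g ξ) ξ :=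
      (((hasStrictFDerivAt_norm_sq ξ).hasFDerivAt.const_mul τ).add hf.hasFDerivAt).sub
        hg.hasFDerivAt
    rw [hder.fderiv]
    ext u
    simp only [add_apply, sub_apply, smul_apply, innerSL_apply_apply, inner_add_left,
      inner_sub_left, real_inner_smul_left, smul_eq_mul, nsmul_eq_mul]
    ring
  rw [hφ, hfy.fderiv, hgx.fderiv, ← innerSL_apply_norm (𝕜 := ℝ)]
  linarith [norm_sub_le (fderiv ℝ g ξ - innerSL ℝ x) (fderiv ℝ f ξ - innerSL ℝ y),
    norm_sub_norm_le (innerSL ℝ ((2 * τ) • ξ + y - x))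
      ((fderiv ℝ g ξ - innerSL ℝ x) - (fderiv ℝ f ξ - innerSL ℝ y))]

lemma one_add_sq_rpow_le {ρ r v : ℝ} (hρ : 0 ≤ ρ) (hr : 0 < r) (hrv : r ≤ v) :
    (1 + v ^ 2) ^ ((1 - ρ) / 2) ≤ (1 + v) * r ^ (-ρ) := by
  have hv : 0 < 1 + v ^ 2 := by positivity
  rw [show (1 - ρ) / 2 = 1 / 2 + (-ρ) / 2 by ring, Real.rpow_add hv, ← Real.sqrt_eq_rpow]
  have hsqrt : √(1 + v ^ 2) ≤ 1 + v :=
    (Real.sqrt_le_left (by linarith)).2 (by nlinarith)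
  have hdecay : (1 + v ^ 2) ^ (-ρ / 2) ≤ r ^ (-ρ) :=
    calc (1 + v ^ 2) ^ (-ρ / 2) ≤ (r ^ 2) ^ (-ρ / 2) :=
          Real.rpow_le_rpow_of_nonpos (by positivity) (by nlinarith) (by linarith)
      _ = r ^ (-ρ) := by
          rw [← Real.rpow_natCast, ← Real.rpow_mul hr.le]; ring_nf
  exact mul_le_mul hsqrt hdecay (by positivity) (by linarith)

lemma norm_fderiv_le_of_symbol_bound {G : E → ℝ} {ξ : E} {C B ρ r v : ℝ} (hρ : 0 ≤ ρ)
    (hr : 0 < r) (hrv : r ≤ v)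
    (h : ‖fderiv ℝ G ξ‖ ≤ C * min ((1 + v ^ 2) ^ ((1 - ρ) / 2)) B) (hB : 0 ≤ B) :
    ‖fderiv ℝ G ξ‖ ≤ max C 0 * ((1 + v) * r ^ (-ρ)) := by
  have hmin : 0 ≤ min ((1 + v ^ 2) ^ ((1 - ρ) / 2)) B := le_min (by positivity) hB
  calc ‖fderiv ℝ G ξ‖ ≤ max C 0 * min ((1 + v ^ 2) ^ ((1 - ρ) / 2)) B :=
        h.trans (mul_le_mul_of_nonneg_right (le_max_left _ _) hmin)
    _ ≤ max C 0 * ((1 + v) * r ^ (-ρ)) :=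
        mul_le_mul_of_nonneg_left ((min_le_left _ _).trans (one_add_sq_rpow_le hρ hr hrv))
          (le_max_right _ _)

end Calculus

lemma mul_one_add_le_of_sub_errors_le {κ μ n τ a b K e E₁ E₂ N : ℝ}
    (hN : κ * (2 * τ * n + a + b) - E₂ - E₁ ≤ N) (hE₁ : E₁ ≤ K * ((1 + a) * e))
    (hE₂ : E₂ ≤ K * ((1 + b) * e)) (hKe : 3 * K * e ≤ κ / 2) (hK : 0 ≤ K) (he : 0 ≤ e)
    (hκ : 0 ≤ κ) (hμ₀ : 0 ≤ μ) (hμn : μ ≤ n) (hμ : μ ≤ 1 / 4) (hτ : 0 ≤ τ) (ha : 1 ≤ a)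
    (hb : 0 ≤ b) :
    κ * μ * (1 + τ + a + b) ≤ N := by
  have herr : E₁ + E₂ ≤ κ / 2 * (a + b) := by
    nlinarith [mul_nonneg (mul_nonneg hK he) (by linarith : 0 ≤ a + b - 1),
      mul_le_mul_of_nonneg_right hKe (by linarith : 0 ≤ a + b)]
  have hτn : κ * μ * τ ≤ κ * (2 * τ * n) := by
    nlinarith [mul_le_mul_of_nonneg_left hμn (mul_nonneg hκ hτ),
      mul_nonneg (mul_nonneg hκ hτ) hμ₀]
  have hab : κ * μ * (1 + a + b) ≤ κ / 2 * (a + b) := by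
    nlinarith [mul_le_mul_of_nonneg_left hμ (by positivity : 0 ≤ κ * (1 + a + b))]
  linarith
theorem nonstationary_phase_lower_bound_general
    (d : ℕ) (ρ : ℝ) (hρ : 0 < ρ)
    (a1 b1 a2 b2 a3 : ℝ)
    (ha3 : 0 < a3)
    (ha2 : a2 < a1)
    (ha3' : a3 < a2)
    (σ σ₁ σt₁ σ₂ σ₃ : ℝ)
    (hσ : -1 < σ) (hσ₁ : σ < σ₁) (hσt₁ : σ₁ < σt₁) (hσ₂ : σt₁ < σ₂)
    (hσ₃ : σ₂ < σ₃) (hσ₃' : σ₃ < 1)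
    (S : ℝ → Rd d → Rd d → ℝ) (R₁ : ℝ)
    (hSsmooth : ∀ R : ℝ, R₁ ≤ R →
      ContDiff ℝ (⊤ : ℕ∞) (fun p : Rd d × Rd d => S R p.1 p.2))
    (hSbounds : ∀ n₁ n₂ : ℕ, ∃ C : ℝ, ∀ R : ℝ, R₁ ≤ R → ∀ x ξ : Rd d,
      ‖iteratedFDeriv ℝ n₁
          (fun x' => iteratedFDeriv ℝ n₂ (fun ξ' => S R x' ξ' - ⟪x', ξ'⟫_ℝ) ξ) x‖
        ≤ C * min ((1 + ‖x‖ ^ 2) ^ ((1 - ρ - (n₁ : ℝ)) / 2))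
            (R ^ ((1 - ρ - (n₁ : ℝ)) / 4))) :
    ∃ c : ℝ, 0 < c ∧ ∃ R₀ : ℝ, 1 < R₀ ∧
      ∀ τ : ℝ, 0 ≤ τ → ∀ R : ℝ, R₀ ≤ R → R₁ ≤ R → ∀ x y ξ : Rd d,
        (x, ξ) ∈ zone d 1 (R ^ ((1 : ℝ) / 3)) (Set.Ioo a2 b2) σ₂ →
        (x, ξ) ∉ zone d 1 (R ^ ((5 : ℝ) / 12)) (Set.Ioo a1 b1) σt₁ →
        (y, ξ) ∈ zone d 1 (R ^ ((1 : ℝ) / 2)) (Set.Ioo a1 b1) σ₁ →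
        c * (1 + τ + ‖x‖ + ‖y‖)
          ≤ ‖fderiv ℝ (fun η : Rd d => τ * ‖η‖ ^ 2 + S R y η - S R x η) ξ‖ := by
  obtain ⟨C, hC⟩ := hSbounds 0 1
  have hκ : 0 < (σt₁ - σ₁) / 8 := by linarith
  have ha1 : 0 < a1 := by linarith
  have hthreshold : ∀ᶠ R : ℝ in atTop, (R ^ (-(1 / 12 : ℝ)) ≤ (σt₁ - σ₁) / 4 ∧
      3 * max C 0 * (R ^ ((1 : ℝ) / 3)) ^ (-ρ) ≤ (σt₁ - σ₁) / 8 / 2) ∧ 1 < R :=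
    ((((tendsto_rpow_neg_atTop (by norm_num)).eventually (ge_mem_nhds (by linarith))).and
      ((((tendsto_rpow_neg_atTop hρ).comp (tendsto_rpow_atTop (by norm_num))).const_mul
        (3 * max C 0)).eventually (ge_mem_nhds (by rw [mul_zero]; linarith)))).and
      (eventually_gt_atTop 1))
  obtain ⟨R₀, hR₀⟩ := hthreshold.exists_forall_of_atTop
  refine ⟨(σt₁ - σ₁) / 8 * min √a1 (1 / 4),
    mul_pos hκ (lt_min (Real.sqrt_pos.2 ha1) (by norm_num)), R₀, (hR₀ R₀ le_rfl).2, ?_⟩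
  intro τ hτ R hR hR₁ x y ξ hx hxn hy
  obtain ⟨⟨hsplit, herr⟩, hR1⟩ := hR₀ R hR
  have hxR : R ^ ((1 : ℝ) / 3) < ‖x‖ := hx.1
  have hyR : R ^ ((1 : ℝ) / 3) ≤ ‖y‖ :=
    (Real.rpow_le_rpow_of_exponent_le hR1.le (by norm_num)).trans hy.1.le
  have hx1 : 1 ≤ ‖x‖ := (Real.one_le_rpow hR1.le (by norm_num)).trans hxR.le
  have hξ : √a1 < ‖ξ‖ := by simpa using Real.sqrt_lt_sqrt ha1.le hy.2.1.1
  have hv := mul_le_norm_two_mul_smul_add_sub_of_zone hτ (by linarith) hσt₁ (by linarith)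
    (by linarith) hsplit (norm_pos_iff.1 ((Real.rpow_nonneg (by linarith) _).trans_lt hxR))
    (norm_pos_iff.1 ((Real.sqrt_nonneg _).trans_lt hξ)) hxn hy
  have hEx := norm_fderiv_le_of_symbol_bound hρ.le (by positivity) hxR.le
    (by simpa using hC R hR₁ x ξ) (by positivity)
  have hEy := norm_fderiv_le_of_symbol_bound hρ.le (by positivity) hyR
    (by simpa using hC R hR₁ y ξ) (by positivity)
  have hS : ∀ z, DifferentiableAt ℝ (fun η => S R z η) ξ := fun z =>
    (((hSsmooth R hR₁).comp (contDiff_const.prodMk contDiff_id)).differentiable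
      (by simp)).differentiableAt
  exact mul_one_add_le_of_sub_errors_le
    (by linarith [sub_le_norm_fderiv_phase x y τ (hS y) (hS x)]) hEx hEy herr
    (le_max_right C 0) (by positivity) hκ.le (by positivity) ((min_le_left _ _).trans hξ.le)
    (min_le_right _ _) hτ hx1 (norm_nonneg y)

/-- **Non-stationary phase lower bound in outgoing zones** (Lemma "ddds").  Let
`J = (aJ,bJ) ⋐ J₁ ⋐ J₂ ⋐ J₃ ⋐ (0,∞)` be nested open intervals and
`-1 < σ < σ₁ < σ̃₁ < σ₂ < σ₃ < 1`.  Let `S R = S_{+,R^{1/4}}` be Isozaki–Kitada phase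
functions solving the eikonal equation on `Γ⁺(R^{1/4}, J₃, σ₃)` with the bounds
`|∂_x^α ∂_ξ^β (S_+(x,ξ) - x·ξ)| ≤ C_{αβ} min(⟨x⟩^{1-ρ-|α|}, R^{(1-ρ-|α|)/4})`.  Then
there are `c > 0` and `R₀ > 1` such that for every `τ ≥ 0`, every `R ≥ R₀` and all
`x, y, ξ` with `(x,ξ) ∈ Γ⁺(R^{1/3},J₂,σ₂) ∖ Γ⁺(R^{5/12},J₁,σ̃₁)` and
`(y,ξ) ∈ Γ⁺(R^{1/2},J₁,σ₁)`, one has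
`|∇_ξ(τ|ξ|² + S_+(y,ξ) - S_+(x,ξ))| ≥ c (1 + τ + |x| + |y|)`. -/
theorem nonstationary_phase_lower_bound
    (d : ℕ) (g : Rd d → Matrix (Fin d) (Fin d) ℝ) (ρ : ℝ) (hρ : 0 < ρ)
    (hg : IsSmoothMetric g) (hlr : LongRange ρ g)
    (hell : ∃ c C : ℝ, 0 < c ∧ UnifBounds g c C)
    (aJ bJ a1 b1 a2 b2 a3 b3 : ℝ)
    (hJ : aJ < bJ) (ha3 : 0 < a3)
    (ha1 : a1 < aJ) (hb1 : bJ < b1) (ha2 : a2 < a1) (hb2 : b1 < b2)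
    (ha3' : a3 < a2) (hb3 : b2 < b3)
    (σ σ₁ σt₁ σ₂ σ₃ : ℝ)
    (hσ : -1 < σ) (hσ₁ : σ < σ₁) (hσt₁ : σ₁ < σt₁) (hσ₂ : σt₁ < σ₂)
    (hσ₃ : σ₂ < σ₃) (hσ₃' : σ₃ < 1)
    (S : ℝ → Rd d → Rd d → ℝ) (R₁ : ℝ)
    (hSsmooth : ∀ R : ℝ, R₁ ≤ R →
      ContDiff ℝ (⊤ : ℕ∞) (fun p : Rd d × Rd d => S R p.1 p.2))
    (hSeik : ∀ R : ℝ, R₁ ≤ R → ∀ x ξ : Rd d,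
      (x, ξ) ∈ zone d 1 (R ^ ((1 : ℝ) / 4)) (Set.Ioo a3 b3) σ₃ →
      ∑ i, ∑ j, (g x)⁻¹ i j * pderivR i (fun y => S R y ξ) x
          * pderivR j (fun y => S R y ξ) x = ‖ξ‖ ^ 2)
    (hSbounds : ∀ n₁ n₂ : ℕ, ∃ C : ℝ, ∀ R : ℝ, R₁ ≤ R → ∀ x ξ : Rd d,
      ‖iteratedFDeriv ℝ n₁
          (fun x' => iteratedFDeriv ℝ n₂ (fun ξ' => S R x' ξ' - ⟪x', ξ'⟫_ℝ) ξ) x‖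
        ≤ C * min ((1 + ‖x‖ ^ 2) ^ ((1 - ρ - (n₁ : ℝ)) / 2))
            (R ^ ((1 - ρ - (n₁ : ℝ)) / 4))) :
    ∃ c : ℝ, 0 < c ∧ ∃ R₀ : ℝ, 1 < R₀ ∧
      ∀ τ : ℝ, 0 ≤ τ → ∀ R : ℝ, R₀ ≤ R → R₁ ≤ R → ∀ x y ξ : Rd d,
        (x, ξ) ∈ zone d 1 (R ^ ((1 : ℝ) / 3)) (Set.Ioo a2 b2) σ₂ →
        (x, ξ) ∉ zone d 1 (R ^ ((5 : ℝ) / 12)) (Set.Ioo a1 b1) σt₁ →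
        (y, ξ) ∈ zone d 1 (R ^ ((1 : ℝ) / 2)) (Set.Ioo a1 b1) σ₁ →
        c * (1 + τ + ‖x‖ + ‖y‖)
          ≤ ‖fderiv ℝ (fun η : Rd d => τ * ‖η‖ ^ 2 + S R y η - S R x η) ξ‖ :=
  nonstationary_phase_lower_bound_general d ρ hρ a1 b1 a2 b2 a3 ha3 ha2 ha3' σ σ₁ σt₁ σ₂ σ₃ hσ hσ₁
    hσt₁ hσ₂ hσ₃ hσ₃' S R₁ hSsmooth hSbounds
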